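/- Let λ be a symplectic partition, i an even part with even multiplicity in λ, or i = 0 when the number of even positive parts with odd multiplicity is even; suppose moreover that i does not lie strictly between i_{2h-1} and i_{2h} for any h (the i_k being the even positive integers of odd multiplicity listed in decreasing order, completed by 0 if their number is odd). Then j_min(i) is odd and, if i ≠ 0, j_max(i) is even. -/

import Mathlib

open Classical

noncomputable section

/-- A partition: weakly decreasing on indices `j ≥ 1` (parts are `l 1 ≥ l 2 ≥ ...`). -/
def IsPartition (l : ℕ → ℕ) : Prop := ∀ j, 1 ≤ j → l (j + 1) ≤ l j

/-- The parts vanish eventually (finitely many nonzero parts). -/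
def EventuallyZero (l : ℕ → ℕ) : Prop := ∃ N, ∀ j, N ≤ j → l j = 0

/-- Multiplicity of `i` as a part of `l`. -/
def mult (l : ℕ → ℕ) (i : ℕ) : ℕ := Nat.card {j : ℕ | 1 ≤ j ∧ l j = i}

/-- The sum of the parts of `l`. -/
def psum (l : ℕ → ℕ) : ℕ := ∑ᶠ j : ℕ, l (j + 1)

/-- Symplectic: every odd part occurs with even multiplicity. -/
def IsSymplectic (l : ℕ → ℕ) : Prop := ∀ i, Odd i → Even (mult l i)

/-- Orthogonal: every even positive part occurs with even multiplicity. -/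
def IsOrthogonal (l : ℕ → ℕ) : Prop := ∀ i, 0 < i → Even i → Even (mult l i)

/-- Special: `l (2j-1)` and `l (2j)` have the same parity for all `j ≥ 1`. -/
def IsSpecial (l : ℕ → ℕ) : Prop := ∀ j, 1 ≤ j → l (2 * j - 1) % 2 = l (2 * j) % 2

/-- `P^+(λ)`: odd `j` with `λ_j` even and `λ_{j-1} > λ_j` (convention `λ_0 = ∞`). -/
def Pplus (l : ℕ → ℕ) : Set ℕ := {j | Odd j ∧ Even (l j) ∧ (j = 1 ∨ l (j - 1) > l j)}

/-- `P^-(λ)`: even `j ≥ 2` with `λ_j` even and `λ_j > λ_{j+1}`. -/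
def Pminus (l : ℕ → ℕ) : Set ℕ := {j | 2 ≤ j ∧ Even j ∧ Even (l j) ∧ l j > l (j + 1)}

/-- `Q^+(λ)`: even `j ≥ 2` with `λ_j` odd and `λ_{j-1} > λ_j`. -/
def Qplus (l : ℕ → ℕ) : Set ℕ := {j | 2 ≤ j ∧ Even j ∧ Odd (l j) ∧ l (j - 1) > l j}

/-- `Q^-(λ)`: odd `j ≥ 1` with `λ_j` odd and `λ_j > λ_{j+1}`. -/
def Qminus (l : ℕ → ℕ) : Set ℕ := {j | Odd j ∧ Odd (l j) ∧ l j > l (j + 1)}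

/-- Orthogonal version of `P^+`: odd `j` with `λ_j` odd and `λ_{j-1} > λ_j` (`λ_0 = ∞`). -/
def PplusO (l : ℕ → ℕ) : Set ℕ := {j | Odd j ∧ Odd (l j) ∧ (j = 1 ∨ l (j - 1) > l j)}

/-- Orthogonal version of `P^-`: even `j ≥ 2` with `λ_j` odd and `λ_j > λ_{j+1}`. -/
def PminusO (l : ℕ → ℕ) : Set ℕ := {j | 2 ≤ j ∧ Even j ∧ Odd (l j) ∧ l j > l (j + 1)}

/-- The sequence `s(λ)`: `1` on `Q^+`, `-1` on `Q^-`, `0` elsewhere. -/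
def sSeq (l : ℕ → ℕ) (j : ℕ) : ℤ :=
  if j ∈ Qplus l then 1 else if j ∈ Qminus l then -1 else 0

/-- The sequence `ζ(λ)`: `1` on `P^+`, `-1` on `P^-`, `0` elsewhere. -/
def zSeq (l : ℕ → ℕ) (j : ℕ) : ℤ :=
  if j ∈ Pplus l then 1 else if j ∈ Pminus l then -1 else 0

/-- Orthogonal `ζ(λ)`: `1` on `PplusO`, `-1` on `PminusO`, `0` elsewhere. -/
def zSeqO (l : ℕ → ℕ) (j : ℕ) : ℤ :=
  if j ∈ PplusO l then 1 else if j ∈ PminusO l then -1 else 0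

/-- `sp(λ) = λ + s(λ)` (termwise, truncated to ℕ). -/
def spPart (l : ℕ → ℕ) (j : ℕ) : ℕ := ((l j : ℤ) + sSeq l j).toNat

/-- Dominance order on partitions. -/
def Dom (l m : ℕ → ℕ) : Prop :=
  ∀ k, ∑ j ∈ Finset.range k, l (j + 1) ≤ ∑ j ∈ Finset.range k, m (j + 1)

/-- `j_min(i)`: smallest index `j ≥ 1` with `l j = i`. -/
def jminPart (l : ℕ → ℕ) (i : ℕ) : ℕ := sInf {j | 1 ≤ j ∧ l j = i}

/-- `j_max(i)`: largest index `j ≥ 1` with `l j = i`. -/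
def jmaxPart (l : ℕ → ℕ) (i : ℕ) : ℕ := sSup {j | 1 ≤ j ∧ l j = i}

/-- `iSeq 1 > iSeq 2 > ... > iSeq t` enumerates the even positive parts of odd
multiplicity of the symplectic partition `l`, completed by a final `0` if their
number is odd (so that `t` is even). -/
def MarkedSeq (l : ℕ → ℕ) (iSeq : ℕ → ℕ) (t : ℕ) : Prop :=
  Even t ∧
  (∀ h h', 1 ≤ h → h < h' → h' ≤ t → iSeq h' < iSeq h) ∧
  (∀ h, 1 ≤ h → h ≤ t → Even (iSeq h)) ∧
  (∀ h, 1 ≤ h → h ≤ t → iSeq h ≠ 0 → Odd (mult l (iSeq h))) ∧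
  (∀ i, 0 < i → Even i → Odd (mult l i) → ∃ h, 1 ≤ h ∧ h ≤ t ∧ iSeq h = i)

/-- Orthogonal analogue: `iSeq` enumerates the odd parts of odd multiplicity. -/
def MarkedSeqO (l : ℕ → ℕ) (iSeq : ℕ → ℕ) (t : ℕ) : Prop :=
  Even t ∧
  (∀ h h', 1 ≤ h → h < h' → h' ≤ t → iSeq h' < iSeq h) ∧
  (∀ h, 1 ≤ h → h ≤ t → Odd (iSeq h)) ∧
  (∀ h, 1 ≤ h → h ≤ t → Odd (mult l (iSeq h))) ∧
  (∀ i, Odd i → Odd (mult l i) → ∃ h, 1 ≤ h ∧ h ≤ t ∧ iSeq h = i)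

/-- `i` lies in the range `[i_{2h}, i_{2h-1}]` for some `h`. -/
def InRange (iSeq : ℕ → ℕ) (t : ℕ) (i : ℕ) : Prop :=
  ∃ h, 1 ≤ h ∧ 2 * h ≤ t ∧ iSeq (2 * h) ≤ i ∧ i ≤ iSeq (2 * h - 1)

/-- Intervals of a (special symplectic) partition `l`, relative to the marked
sequence `iSeq` of length `t`. -/
def IsItv (l : ℕ → ℕ) (iSeq : ℕ → ℕ) (t : ℕ) (Δ : Set ℕ) : Prop :=
  (∃ h, 1 ≤ h ∧ 2 * h ≤ t ∧
      Δ = {i | (i = 0 ∨ 0 < mult l i) ∧ iSeq (2 * h) ≤ i ∧ i ≤ iSeq (2 * h - 1)}) ∨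
  (∃ i, Even i ∧ (i = 0 ∨ 0 < mult l i) ∧ ¬ InRange iSeq t i ∧ Δ = {i})

/-- Intervals of a (special orthogonal, even) partition `l`. -/
def IsItvO (l : ℕ → ℕ) (iSeq : ℕ → ℕ) (t : ℕ) (Δ : Set ℕ) : Prop :=
  (∃ h, 1 ≤ h ∧ 2 * h ≤ t ∧
      Δ = {i | 0 < mult l i ∧ iSeq (2 * h) ≤ i ∧ i ≤ iSeq (2 * h - 1)}) ∨
  (∃ i, Odd i ∧ 0 < mult l i ∧ ¬ InRange iSeq t i ∧ Δ = {i})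

/-- `J(Δ)`: the set of indices `j ≥ 1` whose part lies in `Δ`. -/
def idxSet (l : ℕ → ℕ) (Δ : Set ℕ) : Set ℕ := {j | 1 ≤ j ∧ l j ∈ Δ}

/-- Good parity at index `j`: `λ_{1,j}` even and `λ_{2,j}` odd. -/
def GoodIdx (l₁ l₂ : ℕ → ℕ) (j : ℕ) : Prop := Even (l₁ j) ∧ Odd (l₂ j)

/-- `J^+`: odd `j` of good parity with a strict decrease at `j-1 → j` for some `d`. -/
def Jplus (l₁ l₂ : ℕ → ℕ) : Set ℕ :=
  {j | Odd j ∧ GoodIdx l₁ l₂ j ∧ (j = 1 ∨ l₁ (j - 1) > l₁ j ∨ l₂ (j - 1) > l₂ j)}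

/-- `J^-`: even `j` of good parity with a strict decrease at `j → j+1` for some `d`. -/
def Jminus (l₁ l₂ : ℕ → ℕ) : Set ℕ :=
  {j | 2 ≤ j ∧ Even j ∧ GoodIdx l₁ l₂ j ∧ (l₁ j > l₁ (j + 1) ∨ l₂ j > l₂ (j + 1))}

/-- The sequence `ξ`: `1` on `J^+`, `-1` on `J^-`, `0` elsewhere. -/
def xiSeq (l₁ l₂ : ℕ → ℕ) (j : ℕ) : ℤ :=
  if j ∈ Jplus l₁ l₂ then 1 else if j ∈ Jminus l₁ l₂ then -1 else 0

/-- The endoscopic induction `λ = λ₁ + λ₂ + ξ` (termwise, truncated to ℕ). -/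
def indPart (l₁ l₂ : ℕ → ℕ) (j : ℕ) : ℕ := ((l₁ j : ℤ) + (l₂ j : ℤ) + xiSeq l₁ l₂ j).toNat

/-
The indices `j` with `λ_j > i` form an initial segment `1, …, n` with `n = ∑_{k > i} mult λ k`,
so `j_min(i) = n + 1` and `j_max(i) = n + mult λ i`. Modulo 2, `n` counts the parts `k > i` of odd
multiplicity; as odd parts of a symplectic partition have even multiplicity, these are exactly
the `i_h > i`, which form an initial segment `i_1, …, i_m`. If `m` were odd, `m < t` and
`i_{m+1} ≤ i < i_m`, so `i` would lie strictly between `i_{2h}` and `i_{2h-1}` for `2h = m + 1`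
unless `i = i_{m+1}`, which the hypotheses on `i` exclude. Hence `n` is even.
-/

open Finset

lemma Finset.mem_iff_le_card_of_downward_closed {s : Finset ℕ} (h0 : 0 ∉ s)
    (hdc : ∀ j ∈ s, ∀ j', 1 ≤ j' → j' ≤ j → j' ∈ s) {j : ℕ} (hj : 1 ≤ j) :
    j ∈ s ↔ j ≤ #s := by
  have hs : s = Ico 1 (#s + 1) := by
    refine eq_of_subset_of_card_le (fun j hj => ?_) (by simp)
    have hj1 : 1 ≤ j := Nat.one_le_iff_ne_zero.mpr (ne_of_mem_of_not_mem hj h0)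
    have : #(Ico 1 (j + 1)) ≤ #s := card_le_card fun j' hj' => by
      rw [mem_Ico] at hj'
      exact hdc j hj j' hj'.1 (by omega)
    simp only [Nat.card_Ico, mem_Ico] at this ⊢
    omega
  conv_lhs => rw [hs]
  simp only [mem_Ico]
  omega

lemma IsPartition.antitoneOn {l : ℕ → ℕ} (hl : IsPartition l) : AntitoneOn l (Set.Ici 1) := by
  rintro j hj j' - hle
  induction j', hle using Nat.le_induction with
  | base => exact le_rfl
  | succ n hjn ih => exact (hl n (le_trans hj hjn)).trans ih

lemma exists_part_of_mult_pos {l : ℕ → ℕ} {k : ℕ} (h : 0 < mult l k) : ∃ j, 1 ≤ j ∧ l j = k := by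
  obtain ⟨⟨⟨j, hj⟩⟩, -⟩ := Nat.card_pos_iff.mp h
  exact ⟨j, hj⟩

def numPartsGT (l : ℕ → ℕ) (i : ℕ) : ℕ := Nat.card {j : ℕ | 1 ≤ j ∧ i < l j}

section Partition

variable {l : ℕ → ℕ}

lemma natCard_parts_eq_card_filter {N : ℕ} (hN : ∀ j, N ≤ j → l j = 0) {P : ℕ → Prop}
    [DecidablePred P] (hP0 : ¬ P 0) :
    Nat.card {j : ℕ | 1 ≤ j ∧ P (l j)} = #{j ∈ Ico 1 N | P (l j)} := by
  have hset : {j : ℕ | 1 ≤ j ∧ P (l j)} = ↑{j ∈ Ico 1 N | P (l j)} := by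
    ext j
    simp only [Set.mem_ofPred_eq, coe_filter, mem_Ico]
    refine ⟨fun ⟨hj, hP⟩ => ⟨⟨hj, ?_⟩, hP⟩, fun ⟨⟨hj, _⟩, hP⟩ => ⟨hj, hP⟩⟩
    by_contra hjN
    exact hP0 (hN j (not_lt.mp hjN) ▸ hP)
  rw [hset, Nat.card_coe_set_eq, Set.ncard_coe_finset]

lemma IsPartition.sat_iff_le_natCard (hl : IsPartition l) (hz : EventuallyZero l)
    {P : ℕ → Prop} (hP : Monotone P) (hP0 : ¬ P 0) {j : ℕ} (hj : 1 ≤ j) :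
    P (l j) ↔ j ≤ Nat.card {j : ℕ | 1 ≤ j ∧ P (l j)} := by
  obtain ⟨N, hN⟩ := hz
  have hzero : ∀ j, ¬ (P (l j) ∧ N ≤ j) := fun j ⟨hPj, hjN⟩ => hP0 (hN j hjN ▸ hPj)
  rw [natCard_parts_eq_card_filter hN hP0, ← mem_iff_le_card_of_downward_closed _ _ hj]
  · simp only [mem_filter, mem_Ico, hj, true_and]
    exact ⟨fun hPj => ⟨not_le.mp fun hjN => hzero j ⟨hPj, hjN⟩, hPj⟩, And.right⟩
  · simp
  · intro j hj j' hj' hle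
    simp only [mem_filter, mem_Ico] at hj ⊢
    refine ⟨⟨hj', by omega⟩, hP ?_ hj.2⟩
    exact hl.antitoneOn (Set.mem_Ici.mpr hj') (Set.mem_Ici.mpr hj.1.1) hle

lemma IsPartition.lt_iff_le_numPartsGT (hl : IsPartition l) (hz : EventuallyZero l) {i j : ℕ}
    (hj : 1 ≤ j) : i < l j ↔ j ≤ numPartsGT l i :=
  hl.sat_iff_le_natCard hz (fun _ _ hab h => h.trans_le hab) (Nat.not_lt_zero i) hj

lemma natCard_parts_ge_eq (hz : EventuallyZero l) {i : ℕ} (hi : 0 < i) :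
    Nat.card {j : ℕ | 1 ≤ j ∧ i ≤ l j} = numPartsGT l i + mult l i := by
  obtain ⟨N, hN⟩ := hz
  rw [natCard_parts_eq_card_filter hN (P := (i ≤ ·)) (by omega), numPartsGT,
    natCard_parts_eq_card_filter hN (P := (i < ·)) (Nat.not_lt_zero i), mult,
    natCard_parts_eq_card_filter hN (P := (· = i)) hi.ne, ← card_union_of_disjoint
    (disjoint_filter.mpr fun _ _ h1 h2 => h1.ne' h2), ← filter_or]
  congr 1
  exact filter_congr fun j _ => le_iff_lt_or_eq.trans (or_congr_right eq_comm)

lemma IsPartition.le_iff_le_numPartsGT_add_mult (hl : IsPartition l) (hz : EventuallyZero l)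
    {i j : ℕ} (hi : 0 < i) (hj : 1 ≤ j) : i ≤ l j ↔ j ≤ numPartsGT l i + mult l i := by
  rw [← natCard_parts_ge_eq hz hi]
  exact hl.sat_iff_le_natCard hz (fun _ _ hab h => h.trans hab) (by omega) hj

lemma IsPartition.jminPart_eq (hl : IsPartition l) (hz : EventuallyZero l) {i : ℕ}
    (hi : ∃ j, 1 ≤ j ∧ l j = i) : jminPart l i = numPartsGT l i + 1 := by
  obtain ⟨j₀, hj₀, hlj₀⟩ := hi
  have hgt {j : ℕ} (hj : 1 ≤ j) := hl.lt_iff_le_numPartsGT hz (i := i) hj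
  refine IsLeast.csInf_eq ⟨⟨by omega, ?_⟩, fun j ⟨hj, hlj⟩ => ?_⟩
  · have hj₀n : ¬ j₀ ≤ numPartsGT l i := (hgt hj₀).not.mp (by omega)
    have hle : l (numPartsGT l i + 1) ≤ i := not_lt.mp ((hgt (by omega)).not.mpr (by omega))
    have hge := hl.antitoneOn (Set.mem_Ici.mpr (by omega : 1 ≤ numPartsGT l i + 1))
      (Set.mem_Ici.mpr hj₀) (by omega : numPartsGT l i + 1 ≤ j₀)
    omega
  · by_contra hlt
    have := (hgt hj).mpr (by omega)
    omega

lemma IsPartition.jmaxPart_eq (hl : IsPartition l) (hz : EventuallyZero l) {i : ℕ} (hi : 0 < i)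
    (hm : 0 < mult l i) : jmaxPart l i = numPartsGT l i + mult l i := by
  have hgt {j : ℕ} (hj : 1 ≤ j) := hl.lt_iff_le_numPartsGT hz (i := i) hj
  have hge {j : ℕ} (hj : 1 ≤ j) := hl.le_iff_le_numPartsGT_add_mult hz hi hj
  refine IsGreatest.csSup_eq ⟨⟨by omega, ?_⟩, fun j ⟨hj, hlj⟩ => (hge hj).mp hlj.ge⟩
  have h1 := (hge (by omega)).mpr le_rfl
  have h2 := (hgt (by omega : 1 ≤ numPartsGT l i + mult l i)).not.mpr (by omega)
  omega

lemma IsPartition.numPartsGT_eq_sum_mult (hl : IsPartition l) (hz : EventuallyZero l) (i : ℕ) :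
    numPartsGT l i = ∑ k ∈ Ioc i (l 1), mult l k := by
  obtain ⟨N, hN⟩ := hz
  rw [numPartsGT, natCard_parts_eq_card_filter hN (P := (i < ·)) (Nat.not_lt_zero i),
    card_eq_sum_card_fiberwise (f := l) (t := Ioc i (l 1))]
  · refine sum_congr rfl fun k hk => ?_
    rw [mem_Ioc] at hk
    rw [mult, natCard_parts_eq_card_filter hN (P := (· = k)) (by omega), filter_filter]
    exact congrArg card (filter_congr fun j _ => ⟨fun h => h.2, fun h => ⟨by omega, h⟩⟩)
  · intro j hj
    simp only [coe_filter, mem_Ico, Set.mem_ofPred_eq] at hj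
    exact mem_Ioc.mpr ⟨hj.2, hl.antitoneOn (Set.mem_Ici.mpr le_rfl) (Set.mem_Ici.mpr hj.1.1) hj.1.1⟩

end Partition

lemma even_card_filter_lt_of_notMem_gaps {s : ℕ → ℕ} {t i : ℕ} (ht : Even t)
    (hs : StrictAntiOn s (Set.Icc 1 t)) (hne : ∀ h, 1 ≤ h → h ≤ t → s h ≠ i)
    (hgap : ¬ ∃ h, 1 ≤ h ∧ 2 * h ≤ t ∧ s (2 * h) < i ∧ i < s (2 * h - 1)) :
    Even #{h ∈ Icc 1 t | i < s h} := by
  set H := {h ∈ Icc 1 t | i < s h}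
  have hH {h : ℕ} (h1 : 1 ≤ h) : h ∈ H ↔ h ≤ #H := by
    refine mem_iff_le_card_of_downward_closed (by simp [H]) (fun h hh h' h1 hle => ?_) h1
    simp only [H, mem_filter, mem_Icc] at hh ⊢
    refine ⟨⟨h1, hle.trans hh.1.2⟩, hh.2.trans_le ?_⟩
    exact hs.antitoneOn ⟨h1, hle.trans hh.1.2⟩ ⟨h1.trans hle, hh.1.2⟩ hle
  by_contra hodd
  obtain ⟨r, hr⟩ := Nat.not_even_iff_odd.mp hodd
  have hlast : #H ∈ H := (hH (by omega)).mpr le_rfl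
  simp only [H, mem_filter, mem_Icc] at hlast
  have hlt : #H < t := by
    refine lt_of_le_of_ne hlast.1.2 fun heq => ?_
    rw [← heq] at ht
    exact Nat.not_even_iff_odd.mpr ⟨r, hr⟩ ht
  have hnext : s (#H + 1) < i := by
    refine lt_of_le_of_ne (not_lt.mp fun hlt' => ?_) (hne _ (by omega) hlt)
    have := (hH (by omega : 1 ≤ #H + 1)).mp (by simp [H]; exact ⟨by omega, hlt'⟩)
    omega
  refine hgap ⟨r + 1, by omega, by omega, ?_, ?_⟩
  · rwa [show 2 * (r + 1) = #H + 1 by omega]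
  · rw [show 2 * (r + 1) - 1 = #H by omega]
    exact hlast.2

namespace MarkedSeq

variable {l iSeq : ℕ → ℕ} {t : ℕ}

lemma strictAntiOn (hmark : MarkedSeq l iSeq t) : StrictAntiOn iSeq (Set.Icc 1 t) :=
  fun h hh h' hh' hlt => hmark.2.1 h h' hh.1 hlt hh'.2

lemma card_filter_lt_eq (hmark : MarkedSeq l iSeq t) (hl : IsPartition l)
    (hsymp : IsSymplectic l) (i : ℕ) :
    #{h ∈ Icc 1 t | i < iSeq h} = #{k ∈ Ioc i (l 1) | Odd (mult l k)} := by
  have hinj := hmark.strictAntiOn.injOn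
  obtain ⟨-, -, -, hodd, hsurj⟩ := hmark
  refine card_nbij iSeq (fun h hh => ?_) (hinj.mono fun h hh => ?_)
    (fun k hk => ?_)
  · simp only [coe_filter, mem_Icc, Set.mem_ofPred_eq] at hh
    have hoddh := hodd h hh.1.1 hh.1.2 (by omega)
    obtain ⟨j, hj, hlj⟩ := exists_part_of_mult_pos hoddh.pos
    simp only [coe_filter, mem_Ioc, Set.mem_ofPred_eq]
    exact ⟨⟨hh.2, hlj ▸ hl.antitoneOn (Set.mem_Ici.mpr le_rfl) (Set.mem_Ici.mpr hj) hj⟩, hoddh⟩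
  · simp only [coe_filter, mem_Icc, Set.mem_ofPred_eq] at hh
    exact hh.1
  · simp only [coe_filter, mem_Ioc, Set.mem_ofPred_eq] at hk
    have hkeven : Even k := by
      by_contra hk'
      exact Nat.not_even_iff_odd.mpr hk.2 (hsymp k (Nat.not_even_iff_odd.mp hk'))
    obtain ⟨h, hh1, hht, rfl⟩ := hsurj k (by omega) hkeven hk.2
    refine ⟨h, ?_, rfl⟩
    simp only [coe_filter, mem_Icc, Set.mem_ofPred_eq]
    exact ⟨⟨hh1, hht⟩, hk.1.1⟩

end MarkedSeq

/-- for `i` an even part of even multiplicity (or `i = 0` when no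
`0` was appended to the marked sequence), not lying strictly between `i_{2h-1}`
and `i_{2h}` for any `h`, `j_min(i)` is odd and, if `i ≠ 0`, `j_max(i)` is even. -/
theorem jmin_odd_jmax_even (l iSeq : ℕ → ℕ) (t : ℕ) (i : ℕ)
    (hpart : IsPartition l) (hzero : EventuallyZero l) (hsymp : IsSymplectic l)
    (hmark : MarkedSeq l iSeq t)
    (hi : (0 < i ∧ Even i ∧ 0 < mult l i ∧ Even (mult l i)) ∨
          (i = 0 ∧ ∀ h, 1 ≤ h → h ≤ t → iSeq h ≠ 0))
    (hnotbetween : ¬ ∃ h, 1 ≤ h ∧ 2 * h ≤ t ∧ iSeq (2 * h) < i ∧ i < iSeq (2 * h - 1)) :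
    Odd (jminPart l i) ∧ (i ≠ 0 → Even (jmaxPart l i)) := by
  have hne : ∀ h, 1 ≤ h → h ≤ t → iSeq h ≠ i := by
    rintro h hh1 hht rfl
    rcases hi with ⟨hpos, -, -, hev⟩ | ⟨h0, hnz⟩
    · exact Nat.not_even_iff_odd.mpr (hmark.2.2.2.1 h hh1 hht hpos.ne') hev
    · exact hnz h hh1 hht h0
  have hn : Even (numPartsGT l i) := by
    rw [hpart.numPartsGT_eq_sum_mult hzero, even_sum_iff_even_card_odd,
      ← hmark.card_filter_lt_eq hpart hsymp]
    exact even_card_filter_lt_of_notMem_gaps hmark.1 hmark.strictAntiOn hne hnotbetween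
  have hex : ∃ j, 1 ≤ j ∧ l j = i := by
    rcases hi with ⟨-, -, hm, -⟩ | ⟨rfl, -⟩
    · exact exists_part_of_mult_pos hm
    · obtain ⟨N, hN⟩ := hzero
      exact ⟨N + 1, by omega, hN _ (by omega)⟩
  refine ⟨hpart.jminPart_eq hzero hex ▸ hn.add_one, fun hi0 => ?_⟩
  obtain ⟨hpos, -, hm, hev⟩ := hi.resolve_right fun h => hi0 h.1
  exact hpart.jmaxPart_eq hzero hpos hm ▸ hn.add hev
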